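/- Let t > 1, W a constant algebraic Weyl tensor on ℝ^4, and for y near −e_4 define Ā_{ij}(y) as the sum over n ∈ ℤ\{0} of W-dependent terms as follows: Ā_{ij}(y) = −(1/3) Σ_{n>0} W_{μijν}(t^n y+e_4)^μ(t^n y+e_4)^ν/|t^n y+e_4|^4 − (1/3) Σ_{n>0}[W_{μijν}(t^{-n} y+e_4)^μ(t^{-n} y+e_4)^ν/|t^{-n} y+e_4|^4 − W_{4ij4}] + (1/3){C_0(t) W_{4ij4} + C_1(t)[(W_{kij4}+W_{4ijk})(y+e_4)^k − 4 W_{4ij4}(y+e_4)_4]}, with C_0, C_1 as defined. Then Ā(−e_4) = 0 and ∇Ā(−e_4) = 0. -/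

import Mathlib

/-! `Ā` is built from `G(u) = W(u, u) / |u|⁴`, which is smooth away from `0` and homogeneous of
degree `-2`. At `y = -e₄` every argument of `G` in the two series is a multiple `c e₄`, where
`G = W₄₄ / c²` and `DG = c⁻³ L` for the linear form `L` of the gauge term. Summed over `n`, the
terms therefore give exactly `C₀ W₄₄` and `C₁ L`, and cancel the gauge term in value and in
derivative. Termwise differentiation is justified by homogeneity: the derivative of the `n`-th term
is `O(t⁻ⁿ)` times `DG` evaluated on a fixed compact set that avoids `0`. -/

/-- A constant 4-tensor on `ℝ⁴` with the algebraic symmetries of the Weyl tensor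
(the role of the index `4` of the paper is played by `(3 : Fin 4)`). -/
def IsWeyl (W : Fin 4 → Fin 4 → Fin 4 → Fin 4 → ℝ) : Prop :=
  (∀ k i j l, W k i j l = - W i k j l) ∧
  (∀ k i j l, W k i j l = - W k i l j) ∧
  (∀ k i j l, W k i j l = W j l k i) ∧
  (∀ k i j l, W k i j l + W i j k l + W j k i l = 0) ∧
  (∀ i j, (∑ k, W k i j k) = 0)

open Filter Topology Metric Set

noncomputable section

namespace WeylGaugeSeries

section GeometricScales

def gaugeConst0 (t : ℝ) : ℝ :=
  ∑' n : ℕ, (1 / (1 - t ^ (n + 1)) ^ 2 + 1 / (1 - (t ^ (n + 1))⁻¹) ^ 2 - 1)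

def gaugeConst1 (t : ℝ) : ℝ :=
  ∑' n : ℕ, (t ^ (n + 1) / (1 - t ^ (n + 1)) ^ 3 + (t ^ (n + 1))⁻¹ / (1 - (t ^ (n + 1))⁻¹) ^ 3)

variable {t : ℝ} (ht : 1 < t)
include ht

lemma summable_inv_pow_succ : Summable fun n : ℕ => (t ^ (n + 1))⁻¹ := by
  simp_rw [← inv_pow]
  exact (summable_nat_add_iff 1).mpr
    (summable_geometric_of_lt_one (by positivity) (inv_lt_one_of_one_lt₀ ht))

lemma hasFDerivAt_tsum_of_norm_le_inv_pow {E : Type*} [NormedAddCommGroup E] [NormedSpace ℝ E]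
    {f : ℕ → E → ℝ} {f' : ℕ → E → E →L[ℝ] ℝ} {x₀ : E} {r C : ℝ} (hr : 0 < r)
    (hf : ∀ n, ∀ y ∈ ball x₀ r, HasFDerivAt (f n) (f' n y) y)
    (hf' : ∀ n, ∀ y ∈ ball x₀ r, ‖f' n y‖ ≤ C * (t ^ (n + 1))⁻¹)
    (hf₀ : Summable fun n => f n x₀) :
    HasFDerivAt (fun y => ∑' n, f n y) (∑' n, f' n x₀) x₀ :=
  hasFDerivAt_tsum_of_isPreconnected ((summable_inv_pow_succ ht).mul_left C) isOpen_ball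
    (convex_ball _ _).isPreconnected hf hf' (mem_ball_self hr) hf₀ (mem_ball_self hr)

lemma summable_comp_inv_pow_succ {φ : ℝ → ℝ} (hφ : DifferentiableAt ℝ φ 0) (hφ0 : φ 0 = 0) :
    Summable fun n : ℕ => φ (t ^ (n + 1))⁻¹ := by
  have hO : φ =O[𝓝 0] fun σ => σ := by simpa [hφ0] using hφ.hasFDerivAt.isBigO_sub
  refine (hO.comp_summable_norm ?_).of_norm
  simpa [abs_of_pos (by positivity : (0 : ℝ) < t)] using summable_inv_pow_succ ht

lemma summable_one_div_one_sub_pow_sq : Summable fun n : ℕ => 1 / (1 - t ^ (n + 1)) ^ 2 := by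
  refine (summable_comp_inv_pow_succ ht (φ := fun σ => σ ^ 2 / (σ - 1) ^ 2)
    (by fun_prop (disch := norm_num)) (by norm_num)).congr fun n => ?_
  have : 1 - t ^ (n + 1) ≠ 0 := (sub_neg.mpr (one_lt_pow₀ ht n.succ_ne_zero)).ne
  field_simp

lemma summable_one_div_one_sub_inv_pow_sq_sub_one :
    Summable fun n : ℕ => 1 / (1 - (t ^ (n + 1))⁻¹) ^ 2 - 1 :=
  summable_comp_inv_pow_succ ht (φ := fun σ => 1 / (1 - σ) ^ 2 - 1)
    (by fun_prop (disch := norm_num)) (by norm_num)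

lemma summable_pow_div_one_sub_pow_cube :
    Summable fun n : ℕ => t ^ (n + 1) / (1 - t ^ (n + 1)) ^ 3 := by
  refine (summable_comp_inv_pow_succ ht (φ := fun σ => σ ^ 2 / (σ - 1) ^ 3)
    (by fun_prop (disch := norm_num)) (by norm_num)).congr fun n => ?_
  have : 1 - t ^ (n + 1) ≠ 0 := (sub_neg.mpr (one_lt_pow₀ ht n.succ_ne_zero)).ne
  field_simp

lemma summable_inv_pow_div_one_sub_inv_pow_cube :
    Summable fun n : ℕ => (t ^ (n + 1))⁻¹ / (1 - (t ^ (n + 1))⁻¹) ^ 3 :=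
  summable_comp_inv_pow_succ ht (φ := fun σ => σ / (1 - σ) ^ 3)
    (by fun_prop (disch := norm_num)) (by norm_num)

lemma gaugeConst0_eq : gaugeConst0 t =
    ∑' n : ℕ, 1 / (1 - t ^ (n + 1)) ^ 2 + ∑' n : ℕ, (1 / (1 - (t ^ (n + 1))⁻¹) ^ 2 - 1) := by
  rw [gaugeConst0, ← (summable_one_div_one_sub_pow_sq ht).tsum_add
    (summable_one_div_one_sub_inv_pow_sq_sub_one ht)]
  exact tsum_congr fun n => add_sub_assoc _ _ _

lemma gaugeConst1_eq : gaugeConst1 t =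
    ∑' n : ℕ, t ^ (n + 1) / (1 - t ^ (n + 1)) ^ 3
      + ∑' n : ℕ, (t ^ (n + 1))⁻¹ / (1 - (t ^ (n + 1))⁻¹) ^ 3 :=
  (summable_pow_div_one_sub_pow_cube ht).tsum_add (summable_inv_pow_div_one_sub_inv_pow_cube ht)

lemma inv_pow_succ_mem_Icc (n : ℕ) : (t ^ (n + 1))⁻¹ ∈ Icc 0 t⁻¹ :=
  ⟨by positivity, inv_anti₀ (by positivity) (le_self_pow₀ ht.le n.succ_ne_zero)⟩

end GeometricScales

variable {ι : Type*} [Fintype ι]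

def quadForm (M : ι → ι → ℝ) (u : ι → ℝ) : ℝ := ∑ μ, ∑ ν, M μ ν * u μ * u ν

def sumSq (u : ι → ℝ) : ℝ := ∑ k, u k ^ 2

def quadKernel (M : ι → ι → ℝ) (u : ι → ℝ) : ℝ := quadForm M u / sumSq u ^ 2

def gaugeForm (M : ι → ι → ℝ) (a : ι) : (ι → ℝ) →L[ℝ] ℝ :=
  ∑ k, (M k a + M a k) • ContinuousLinearMap.proj k - (4 * M a a) • ContinuousLinearMap.proj a

def regularPart [DecidableEq ι] (M : ι → ι → ℝ) (a : ι) (t : ℝ) (y : ι → ℝ) : ℝ :=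
  -(1 / 3 : ℝ) * ∑' n : ℕ, quadKernel M (t ^ (n + 1) • y + Pi.single a 1)
    - (1 / 3 : ℝ) * ∑' n : ℕ, (quadKernel M ((t ^ (n + 1))⁻¹ • y + Pi.single a 1) - M a a)
    + (1 / 3 : ℝ) * (gaugeConst0 t * M a a + gaugeConst1 t * gaugeForm M a (y + Pi.single a 1))

lemma sumSq_smul (c : ℝ) (u : ι → ℝ) : sumSq (c • u) = c ^ 2 * sumSq u := by
  simp only [sumSq, Pi.smul_apply, smul_eq_mul, Finset.mul_sum, mul_pow]

lemma sumSq_ne_zero {u : ι → ℝ} (hu : u ≠ 0) : sumSq u ≠ 0 := by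
  obtain ⟨k, hk⟩ := Function.ne_iff.mp hu
  have hk' : u k ≠ 0 := hk
  exact (Finset.sum_pos' (fun _ _ => sq_nonneg _) ⟨k, Finset.mem_univ _, by positivity⟩).ne'

lemma hasFDerivAt_sumSq (u : ι → ℝ) :
    HasFDerivAt sumSq (∑ k, (2 * u k) • (ContinuousLinearMap.proj k : (ι → ℝ) →L[ℝ] ℝ)) u := by
  unfold sumSq
  refine HasFDerivAt.fun_sum fun k _ => ?_
  simpa using (hasFDerivAt_apply (𝕜 := ℝ) k u).pow 2

variable (M : ι → ι → ℝ)

lemma quadForm_smul (c : ℝ) (u : ι → ℝ) : quadForm M (c • u) = c ^ 2 * quadForm M u := by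
  simp only [quadForm, Pi.smul_apply, smul_eq_mul, Finset.mul_sum]
  exact Finset.sum_congr rfl fun _ _ => Finset.sum_congr rfl fun _ _ => by ring

lemma quadKernel_smul (c : ℝ) (u : ι → ℝ) : quadKernel M (c • u) = quadKernel M u / c ^ 2 := by
  rcases eq_or_ne c 0 with rfl | hc
  · simp [quadKernel, sumSq]
  · simp only [quadKernel, quadForm_smul, sumSq_smul]
    field_simp

lemma quadKernel_smul_add {s : ℝ} (hs : s ≠ 0) (u v : ι → ℝ) :
    quadKernel M (s • u + v) = (s⁻¹) ^ 2 * quadKernel M (u + s⁻¹ • v) := by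
  rw [show s • u + v = s • (u + s⁻¹ • v) by rw [smul_add, smul_smul, mul_inv_cancel₀ hs, one_smul],
    quadKernel_smul, inv_pow, div_eq_inv_mul]

lemma hasFDerivAt_quadForm (u : ι → ℝ) :
    HasFDerivAt (quadForm M) (∑ μ, ∑ ν,
      ((M μ ν * u μ) • (ContinuousLinearMap.proj ν : (ι → ℝ) →L[ℝ] ℝ)
        + u ν • M μ ν • (ContinuousLinearMap.proj μ : (ι → ℝ) →L[ℝ] ℝ))) u := by
  unfold quadForm
  refine HasFDerivAt.fun_sum fun μ _ => HasFDerivAt.fun_sum fun ν _ => ?_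
  exact ((hasFDerivAt_apply (𝕜 := ℝ) μ u).const_mul (M μ ν)).mul (hasFDerivAt_apply (𝕜 := ℝ) ν u)

lemma contDiffAt_quadKernel {u : ι → ℝ} (hu : u ≠ 0) : ContDiffAt ℝ 1 (quadKernel M) u := by
  unfold quadKernel quadForm
  exact ContDiffAt.div (by fun_prop) (by unfold sumSq; fun_prop) (pow_ne_zero 2 (sumSq_ne_zero hu))

lemma exists_bound_fderiv_quadKernel_comp {K : Set (ℝ × (ι → ℝ))} (hK : IsCompact K)
    {φ : ℝ × (ι → ℝ) → ι → ℝ} (hφ : Continuous φ) (hne : ∀ p ∈ K, φ p ≠ 0) :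
    ∃ C, ∀ p ∈ K, ‖fderiv ℝ (quadKernel M) (φ p)‖ ≤ C := by
  have hcont : ContinuousOn (fderiv ℝ (quadKernel M)) {0}ᶜ :=
    ContDiffOn.continuousOn_fderiv_of_isOpen
      (fun _ hu => (contDiffAt_quadKernel M hu).contDiffWithinAt) isOpen_compl_singleton le_rfl
  exact hK.exists_bound_of_continuousOn (hcont.comp hφ.continuousOn hne)

variable (a : ι)

lemma gaugeForm_apply (v : ι → ℝ) :
    gaugeForm M a v = ∑ k, (M k a + M a k) * v k - 4 * M a a * v a := by
  simp [gaugeForm]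

variable [DecidableEq ι]

lemma quadKernel_smul_single (c : ℝ) : quadKernel M (c • Pi.single a 1) = M a a / c ^ 2 := by
  rw [quadKernel_smul]
  simp [quadKernel, quadForm, sumSq, Pi.single_apply]

lemma quadKernel_smul_neg_add_single (c : ℝ) :
    quadKernel M (c • -Pi.single a 1 + Pi.single a 1) = M a a / (1 - c) ^ 2 := by
  rw [show c • -Pi.single a (1 : ℝ) + Pi.single a 1 = (1 - c) • Pi.single a 1 by module,
    quadKernel_smul_single]

lemma hasFDerivAt_quadForm_single :
    HasFDerivAt (quadForm M) (∑ k, (M k a + M a k) • (ContinuousLinearMap.proj k : (ι → ℝ) →L[ℝ] ℝ))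
      (Pi.single a 1) := by
  convert hasFDerivAt_quadForm M (Pi.single a 1) using 1
  ext v
  simp [Pi.single_apply, Finset.sum_add_distrib, add_mul, add_comm]

omit M in
lemma hasFDerivAt_sumSq_single :
    HasFDerivAt sumSq ((2 : ℝ) • (ContinuousLinearMap.proj a : (ι → ℝ) →L[ℝ] ℝ))
      (Pi.single a 1) := by
  convert hasFDerivAt_sumSq (Pi.single a (1 : ℝ)) using 1
  ext v
  simp [Pi.single_apply]

lemma hasFDerivAt_quadKernel_single :
    HasFDerivAt (quadKernel M) (gaugeForm M a) (Pi.single a 1) := by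
  have hsumSq : sumSq (Pi.single a (1 : ℝ)) = 1 := by simp [sumSq, Pi.single_apply]
  have hinv := (hasDerivAt_inv (by simp [hsumSq])).comp_hasFDerivAt _
    ((hasFDerivAt_sumSq_single a).pow 2)
  have hfun : quadKernel M = fun u => quadForm M u * (sumSq u ^ 2)⁻¹ := by
    funext u; exact div_eq_mul_inv _ _
  rw [hfun]
  refine ((hasFDerivAt_quadForm_single M a).mul hinv).congr_fderiv ?_
  ext v
  simp only [quadForm, Pi.single_apply, mul_ite, mul_one, mul_zero, Finset.sum_ite_eq',
    Finset.mem_univ, ↓reduceIte, hsumSq, one_pow, inv_one, Nat.add_one_sub_one, nsmul_eq_mul,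
    Nat.cast_ofNat, neg_smul, one_smul, smul_neg, Function.comp_apply, add_apply, neg_apply,
    smul_apply, ContinuousLinearMap.proj_apply, smul_eq_mul, sum_apply, gaugeForm, sub_apply]
  ring

lemma hasFDerivAt_quadKernel_smul_single {c : ℝ} (hc : c ≠ 0) :
    HasFDerivAt (quadKernel M) ((c ^ 3)⁻¹ • gaugeForm M a) (c • Pi.single a 1) := by
  let L : (ι → ℝ) →L[ℝ] (ι → ℝ) := c⁻¹ • ContinuousLinearMap.id ℝ _
  have hG := hasFDerivAt_quadKernel_single M a
  rw [← show L (c • Pi.single a 1) = Pi.single a 1 by simp [L, smul_smul, mul_inv_cancel₀ hc]]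
    at hG
  have hfun : quadKernel M = fun u => (c ^ 2)⁻¹ * (quadKernel M ∘ L) u := by
    funext u
    simp only [FunLike.coe_smul, ContinuousLinearMap.coe_id', Function.comp_apply, Pi.smul_apply,
      id_eq, quadKernel_smul, inv_pow, div_inv_eq_mul, L]
    field_simp
  rw [hfun]
  refine ((hG.comp _ L.hasFDerivAt).const_mul (c ^ 2)⁻¹).congr_fderiv ?_
  ext v
  simp only [ContinuousLinearMap.comp_smulₛₗ, map_inv₀, Real.ringHom_apply,
    ContinuousLinearMap.comp_id, smul_apply, smul_eq_mul, L]
  field_simp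

lemma abs_apply_add_one_le {r : ℝ} {y : ι → ℝ} (hy : y ∈ closedBall (-Pi.single a 1) r) :
    |y a + 1| ≤ r := by
  simpa [Real.dist_eq] using (dist_le_pi_dist y (-Pi.single a 1) a).trans hy

variable {t : ℝ} (ht : 1 < t)
include ht

lemma add_smul_single_ne_zero {σ : ℝ} (hσ : σ ≤ t⁻¹) {y : ι → ℝ}
    (hy : y ∈ closedBall (-Pi.single a 1) ((1 - t⁻¹) / 2)) : y + σ • Pi.single a 1 ≠ 0 := by
  intro h
  have hya := congrFun h a
  simp only [Pi.add_apply, Pi.smul_apply, Pi.single_eq_same, smul_eq_mul, mul_one,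
    Pi.zero_apply] at hya
  have := abs_le.mp (abs_apply_add_one_le a hy)
  have := inv_lt_one_of_one_lt₀ ht
  linarith

lemma smul_add_single_ne_zero {σ : ℝ} (hσ : σ ∈ Icc 0 t⁻¹) {y : ι → ℝ}
    (hy : y ∈ closedBall (-Pi.single a 1) ((1 - t⁻¹) / 2)) : σ • y + Pi.single a 1 ≠ 0 := by
  intro h
  have hya := congrFun h a
  simp only [Pi.add_apply, Pi.smul_apply, Pi.single_eq_same, smul_eq_mul,
    Pi.zero_apply] at hya
  have := abs_le.mp (abs_apply_add_one_le a hy)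
  have := inv_lt_one_of_one_lt₀ ht
  nlinarith [hσ.1, hσ.2]

lemma hasFDerivAt_tsum_quadKernel_pow_smul :
    HasFDerivAt (fun y => ∑' n : ℕ, quadKernel M (t ^ (n + 1) • y + Pi.single a 1))
      ((∑' n : ℕ, t ^ (n + 1) / (1 - t ^ (n + 1)) ^ 3) • gaugeForm M a) (-Pi.single a 1) := by
  set e : ι → ℝ := Pi.single a 1
  have hr : 0 < (1 - t⁻¹) / 2 := by linarith [inv_lt_one_of_one_lt₀ ht]
  set r := (1 - t⁻¹) / 2
  obtain ⟨C, hC⟩ := exists_bound_fderiv_quadKernel_comp M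
    (isCompact_Icc.prod (isCompact_closedBall (-e) r)) (φ := fun p => p.2 + p.1 • e)
    (by fun_prop) fun p hp => add_smul_single_ne_zero a ht hp.1.2 hp.2
  have hderiv : ∀ (n : ℕ), ∀ y ∈ ball (-e) r,
      HasFDerivAt (fun y => quadKernel M (t ^ (n + 1) • y + e))
        (((t ^ (n + 1))⁻¹) ^ 2 • fderiv ℝ (quadKernel M) (y + (t ^ (n + 1))⁻¹ • e)) y := by
    intro n y hy
    simp_rw [quadKernel_smul_add M (pow_pos (zero_lt_one.trans ht) (n + 1)).ne']
    have hG := ((contDiffAt_quadKernel M (add_smul_single_ne_zero a ht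
      (inv_pow_succ_mem_Icc ht n).2 (ball_subset_closedBall hy))).differentiableAt
      one_ne_zero).hasFDerivAt
    exact ((hasFDerivAt_comp_add_right _).mpr hG).const_mul _
  have hbound : ∀ (n : ℕ), ∀ y ∈ ball (-e) r,
      ‖((t ^ (n + 1))⁻¹) ^ 2 • fderiv ℝ (quadKernel M) (y + (t ^ (n + 1))⁻¹ • e)‖
        ≤ C * (t ^ (n + 1))⁻¹ := by
    intro n y hy
    have hσ := inv_pow_succ_mem_Icc ht n
    have hCy := hC (_, y) ⟨hσ, ball_subset_closedBall hy⟩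
    have hσ1 : (t ^ (n + 1))⁻¹ ≤ 1 := hσ.2.trans (inv_le_one_of_one_le₀ ht.le)
    rw [norm_smul, Real.norm_of_nonneg (by positivity), sq, mul_assoc, mul_comm C]
    exact mul_le_mul_of_nonneg_left
      ((mul_le_of_le_one_left (norm_nonneg _) hσ1).trans hCy) hσ.1
  have hsum0 : Summable fun n : ℕ => quadKernel M (t ^ (n + 1) • -e + e) := by
    simp only [e, quadKernel_smul_neg_add_single, div_eq_mul_one_div (M a a)]
    exact (summable_one_div_one_sub_pow_sq ht).mul_left _
  have h := hasFDerivAt_tsum_of_norm_le_inv_pow ht hr hderiv hbound hsum0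
  rw [← (summable_pow_div_one_sub_pow_cube ht).tsum_smul_const]
  refine h.congr_fderiv (tsum_congr fun n => ?_)
  have hs : 1 < t ^ (n + 1) := one_lt_pow₀ ht n.succ_ne_zero
  have hc : (t ^ (n + 1))⁻¹ - 1 ≠ 0 := (sub_neg.mpr (inv_lt_one_of_one_lt₀ hs)).ne
  rw [show -e + (t ^ (n + 1))⁻¹ • e = ((t ^ (n + 1))⁻¹ - 1) • e by module,
    (hasFDerivAt_quadKernel_smul_single M a hc).fderiv, smul_smul]
  congr 1
  have : 1 - t ^ (n + 1) ≠ 0 := by linarith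
  field_simp

lemma hasFDerivAt_tsum_quadKernel_inv_pow_smul :
    HasFDerivAt (fun y => ∑' n : ℕ, (quadKernel M ((t ^ (n + 1))⁻¹ • y + Pi.single a 1) - M a a))
      ((∑' n : ℕ, (t ^ (n + 1))⁻¹ / (1 - (t ^ (n + 1))⁻¹) ^ 3) • gaugeForm M a)
      (-Pi.single a 1) := by
  set e : ι → ℝ := Pi.single a 1
  have hr : 0 < (1 - t⁻¹) / 2 := by linarith [inv_lt_one_of_one_lt₀ ht]
  set r := (1 - t⁻¹) / 2
  obtain ⟨C, hC⟩ := exists_bound_fderiv_quadKernel_comp M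
    (isCompact_Icc.prod (isCompact_closedBall (-e) r)) (φ := fun p => p.1 • p.2 + e)
    (by fun_prop) fun p hp => smul_add_single_ne_zero a ht hp.1 hp.2
  have hderiv : ∀ (n : ℕ), ∀ y ∈ ball (-e) r,
      HasFDerivAt (fun y => quadKernel M ((t ^ (n + 1))⁻¹ • y + e) - M a a)
        ((t ^ (n + 1))⁻¹ • fderiv ℝ (quadKernel M) ((t ^ (n + 1))⁻¹ • y + e)) y := by
    intro n y hy
    have hG := ((contDiffAt_quadKernel M (smul_add_single_ne_zero a ht
      (inv_pow_succ_mem_Icc ht n) (ball_subset_closedBall hy))).differentiableAt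
      one_ne_zero).hasFDerivAt
    refine ((hasFDerivAt_sub_const_iff _).mpr (hG.comp y
      (((hasFDerivAt_id y).const_smul (t ^ (n + 1))⁻¹).add_const e))).congr_fderiv ?_
    ext v
    simp [e]
  have hbound : ∀ (n : ℕ), ∀ y ∈ ball (-e) r,
      ‖(t ^ (n + 1))⁻¹ • fderiv ℝ (quadKernel M) ((t ^ (n + 1))⁻¹ • y + e)‖
        ≤ C * (t ^ (n + 1))⁻¹ := by
    intro n y hy
    have hσ := inv_pow_succ_mem_Icc ht n
    rw [norm_smul, Real.norm_of_nonneg hσ.1, mul_comm C]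
    exact mul_le_mul_of_nonneg_left (hC (_, y) ⟨hσ, ball_subset_closedBall hy⟩) hσ.1
  have hsum0 : Summable fun n : ℕ => quadKernel M ((t ^ (n + 1))⁻¹ • -e + e) - M a a := by
    simp only [e, quadKernel_smul_neg_add_single, div_eq_mul_one_div (M a a), ← mul_sub_one]
    exact (summable_one_div_one_sub_inv_pow_sq_sub_one ht).mul_left _
  have h := hasFDerivAt_tsum_of_norm_le_inv_pow ht hr hderiv hbound hsum0
  rw [← (summable_inv_pow_div_one_sub_inv_pow_cube ht).tsum_smul_const]
  refine h.congr_fderiv (tsum_congr fun n => ?_)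
  have hc : 1 - (t ^ (n + 1))⁻¹ ≠ 0 :=
    (sub_pos.mpr (inv_lt_one_of_one_lt₀ (one_lt_pow₀ ht n.succ_ne_zero))).ne'
  rw [show (t ^ (n + 1))⁻¹ • -e + e = (1 - (t ^ (n + 1))⁻¹) • e by module,
    (hasFDerivAt_quadKernel_smul_single M a hc).fderiv, smul_smul, div_eq_mul_inv]

lemma regularPart_neg_single : regularPart M a t (-Pi.single a 1) = 0 := by
  simp only [regularPart, quadKernel_smul_neg_add_single, neg_add_cancel, map_zero, mul_zero,
    add_zero, gaugeConst0_eq ht, div_eq_mul_one_div (M a a), ← mul_sub_one, tsum_mul_left]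
  ring

lemma hasFDerivAt_regularPart_neg_single :
    HasFDerivAt (regularPart M a t) (0 : (ι → ℝ) →L[ℝ] ℝ) (-Pi.single a 1) := by
  have hgauge : HasFDerivAt (fun y => gaugeForm M a (y + Pi.single a 1)) (gaugeForm M a)
      (-Pi.single a (1 : ℝ)) :=
    (hasFDerivAt_comp_add_right _).mpr (gaugeForm M a).hasFDerivAt
  have h := (((hasFDerivAt_tsum_quadKernel_pow_smul M a ht).const_mul (-(1 / 3 : ℝ))).sub
    ((hasFDerivAt_tsum_quadKernel_inv_pow_smul M a ht).const_mul (1 / 3 : ℝ))).add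
    (((hgauge.const_mul (gaugeConst1 t)).const_add (gaugeConst0 t * M a a)).const_mul (1 / 3 : ℝ))
  refine h.congr_fderiv ?_
  ext v
  simp only [one_div, neg_smul, gaugeConst1_eq ht, add_apply, sub_apply, neg_apply, smul_apply,
    smul_eq_mul, zero_apply]
  ring

end WeylGaugeSeries

end

theorem stmt_19 (t : ℝ) (ht : 1 < t)
    (W : Fin 4 → Fin 4 → Fin 4 → Fin 4 → ℝ)
    (e4 : Fin 4 → ℝ) (he4 : e4 = fun k => if k = 3 then (1:ℝ) else 0)
    (C0 C1 : ℝ)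
    (hC0 : C0 = ∑' n : ℕ,
      (1 / (1 - t ^ (n + 1)) ^ 2 + 1 / (1 - (t ^ (n + 1))⁻¹) ^ 2 - 1))
    (hC1 : C1 = ∑' n : ℕ,
      (t ^ (n + 1) / (1 - t ^ (n + 1)) ^ 3
        + (t ^ (n + 1))⁻¹ / (1 - (t ^ (n + 1))⁻¹) ^ 3))
    (Abar : Fin 4 → Fin 4 → (Fin 4 → ℝ) → ℝ)
    (hA : ∀ i j (y : Fin 4 → ℝ), Abar i j y =
      -(1/3 : ℝ) * (∑' n : ℕ,
          (∑ μ, ∑ ν, W μ i j ν * (t ^ (n + 1) * y μ + e4 μ) * (t ^ (n + 1) * y ν + e4 ν))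
            / (∑ k, (t ^ (n + 1) * y k + e4 k) ^ 2) ^ 2)
      - (1/3 : ℝ) * (∑' n : ℕ,
          ((∑ μ, ∑ ν, W μ i j ν * ((t ^ (n + 1))⁻¹ * y μ + e4 μ)
              * ((t ^ (n + 1))⁻¹ * y ν + e4 ν))
            / (∑ k, ((t ^ (n + 1))⁻¹ * y k + e4 k) ^ 2) ^ 2 - W 3 i j 3))
      + (1/3 : ℝ) * (C0 * W 3 i j 3
          + C1 * ((∑ k, (W k i j 3 + W 3 i j k) * (y k + e4 k))
              - 4 * W 3 i j 3 * (y 3 + e4 3)))) :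
    ∀ i j, Abar i j (-e4) = 0 ∧ fderiv ℝ (Abar i j) (-e4) = 0 := by
  intro i j
  have he : e4 = Pi.single 3 1 := by
    rw [he4]; ext k; simp [Pi.single_apply]
  subst he hC0 hC1
  have hAbar : Abar i j = WeylGaugeSeries.regularPart (fun μ ν => W μ i j ν) 3 t := by
    funext y
    rw [hA, WeylGaugeSeries.regularPart, WeylGaugeSeries.gaugeForm_apply]
    rfl
  rw [hAbar]
  exact ⟨WeylGaugeSeries.regularPart_neg_single _ 3 ht,
    (WeylGaugeSeries.hasFDerivAt_regularPart_neg_single _ 3 ht).fderiv⟩
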